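/- For n >= 2, the number of flattened {1}-insertion parking functions of order n with exactly 2 runs equals the Eulerian number A(n,1) = 2^n - n - 1, the number of permutations of [n] with exactly one descent. -/

import Mathlib

namespace FlatPF

/-- Decomposition of a word into maximal weakly increasing runs. -/
def runs : List ℕ → List (List ℕ)
  | [] => []
  | a :: l =>
    match runs l with
    | [] => [[a]]
    | [] :: rs => [a] :: rs
    | (b :: t) :: rs => if a ≤ b then (a :: b :: t) :: rs else [a] :: (b :: t) :: rs

/-- The number of maximal weakly increasing runs of a word. -/
def numRuns (w : List ℕ) : ℕ := (runs w).length

/-- A word is flattened if the leading values of its runs are weakly increasing. -/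
def IsFlattened (w : List ℕ) : Prop :=
  List.Chain' (· ≤ ·) ((runs w).map (fun r => r.headD 0))

/-- A word is a parking function: entries in `[m]` and the weakly increasing
rearrangement `(a'_1, …, a'_m)` satisfies `a'_i ≤ i`. -/
def IsPF (w : List ℕ) : Prop :=
  (∀ x ∈ w, 1 ≤ x ∧ x ≤ w.length) ∧
  ∀ i < w.length, (w.mergeSort (· ≤ ·)).getD i 0 ≤ i + 1

/-- `w` is obtained by inserting the elements of the multiset `S` into some
permutation of `[n]`, keeping the letters of the permutation in relative order. -/
def IsInsertion (S : Multiset ℕ) (n : ℕ) (w : List ℕ) : Prop :=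
  (↑w : Multiset ℕ) = ↑(List.range' 1 n) + S ∧
  ∃ p : List ℕ, p.Perm (List.range' 1 n) ∧ p.Sublist w

/-- Flattened `S`-insertion parking functions of order `n`. -/
def flatIns (S : Multiset ℕ) (n : ℕ) : Set (List ℕ) :=
  {w | IsInsertion S n w ∧ IsFlattened w}

/-- Flattened `S`-insertion parking functions of order `n` with exactly `k` runs. -/
def flatInsK (S : Multiset ℕ) (n k : ℕ) : Set (List ℕ) :=
  {w | IsInsertion S n w ∧ IsFlattened w ∧ numRuns w = k}

/-- `f(S; n, k)`, the number of flattened `S`-insertion parking functions of order `n`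
with exactly `k` runs.  In particular `fS 0 n k` is the number of flattened
permutations of `[n]` with `k` runs. -/
noncomputable def fS (S : Multiset ℕ) (n k : ℕ) : ℕ := (flatInsK S n k).ncard

end FlatPF

/-!
Every letter of a `{1}`-insertion word is at least `1`, and a flattened word begins with its
minimum, so a flattened `{1}`-insertion word with two runs is `1 :: σ` for a permutation `σ`
of `[n]`. Conversely, prepending `1` to `σ` just extends the first run of `σ`, and when `σ` has
two runs the result is automatically flattened. Hence `w ↦ w.tail` is a bijection onto the
permutations of `[n]` with two runs. Such a permutation is `A.sort ++ ([n] \ A).sort`, with `A`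
the set of letters of its first run, for a unique `A` having an element larger than some
element of `[n] \ A`; the subsets failing this are the `n + 1` initial segments `{1, …, k}`.
-/

namespace FlatPF

theorem runs_spec (w : List ℕ) :
    (runs w).flatten = w ∧ (∀ r ∈ runs w, r ≠ [] ∧ r.Pairwise (· ≤ ·)) ∧
      (runs w).IsChain (fun r s => ∃ x ∈ r, ∃ y ∈ s, y < x) := by
  induction w with
  | nil => simp [runs]
  | cons a l ih =>
    obtain ⟨hflat, hrun, hdesc⟩ := ih
    rw [runs]
    rcases hr : runs l with - | ⟨r, rs⟩
    · simp_all
    rw [hr] at hflat hrun hdesc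
    rcases r with - | ⟨b, t⟩
    · exact absurd rfl (hrun [] List.mem_cons_self).1
    dsimp only
    split_ifs with hab
    · refine ⟨by simpa using hflat, ?_, ?_⟩
      · simp only [List.mem_cons, forall_eq_or_imp] at hrun ⊢
        refine ⟨⟨List.cons_ne_nil _ _, List.pairwise_cons.2 ⟨?_, hrun.1.2⟩⟩, hrun.2⟩
        simp only [List.mem_cons, forall_eq_or_imp]
        exact ⟨hab, fun x hx => hab.trans (List.rel_of_pairwise_cons hrun.1.2 hx)⟩
      · rcases rs with - | ⟨s, rs⟩
        · simp
        obtain ⟨⟨x, hx, y, hy, hyx⟩, hrs⟩ := List.isChain_cons_cons.1 hdesc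
        exact List.isChain_cons_cons.2 ⟨⟨x, List.mem_cons_of_mem _ hx, y, hy, hyx⟩, hrs⟩
    · refine ⟨by simpa using hflat, ?_, ?_⟩
      · simp only [List.mem_cons, forall_eq_or_imp] at hrun ⊢
        exact ⟨⟨List.cons_ne_nil _ _, List.pairwise_singleton _ _⟩, hrun⟩
      · exact List.isChain_cons_cons.2
          ⟨⟨a, List.mem_singleton_self _, b, List.mem_cons_self, by omega⟩, hdesc⟩

theorem flatten_runs (w : List ℕ) : (runs w).flatten = w := (runs_spec w).1

theorem ne_nil_of_mem_runs {w r : List ℕ} (h : r ∈ runs w) : r ≠ [] :=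
  ((runs_spec w).2.1 r h).1

theorem pairwise_of_mem_runs {w r : List ℕ} (h : r ∈ runs w) : r.Pairwise (· ≤ ·) :=
  ((runs_spec w).2.1 r h).2

theorem isChain_runs (w : List ℕ) :
    (runs w).IsChain (fun r s => ∃ x ∈ r, ∃ y ∈ s, y < x) :=
  (runs_spec w).2.2

theorem runs_of_pairwise : ∀ {l : List ℕ}, l.Pairwise (· ≤ ·) → l ≠ [] → runs l = [l]
  | [a], _, _ => rfl
  | a :: b :: t, hl, _ => by
    rw [runs, runs_of_pairwise hl.of_cons (List.cons_ne_nil _ _)]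
    exact if_pos (List.rel_of_pairwise_cons hl List.mem_cons_self)

theorem runs_append_of_exists_lt {l₁ l₂ : List ℕ} (h₁ : l₁.Pairwise (· ≤ ·))
    (h₂ : l₂.Pairwise (· ≤ ·)) (hne : l₂ ≠ []) (hdesc : ∃ x ∈ l₁, ∃ y ∈ l₂, y < x) :
    runs (l₁ ++ l₂) = [l₁, l₂] := by
  induction l₁ with
  | nil => simp at hdesc
  | cons a t ih =>
    obtain ⟨x, hx, y, hy, hyx⟩ := hdesc
    rcases t with - | ⟨c, t⟩
    · obtain ⟨b, l, rfl⟩ := List.exists_cons_of_ne_nil hne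
      have hba : b < a := by
        rw [List.mem_singleton.1 hx] at hyx
        rcases List.mem_cons.1 hy with rfl | hy
        · exact hyx
        · exact (List.rel_of_pairwise_cons h₂ hy).trans_lt hyx
      rw [List.singleton_append, runs, runs_of_pairwise h₂ hne]
      exact if_neg (by omega)
    · have hac : a ≤ c := List.rel_of_pairwise_cons h₁ List.mem_cons_self
      have hdesc' : ∃ x ∈ c :: t, ∃ y ∈ l₂, y < x := by
        rcases List.mem_cons.1 hx with rfl | hx
        · exact ⟨c, List.mem_cons_self, y, hy, hyx.trans_le hac⟩
        · exact ⟨x, hx, y, hy, hyx⟩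
      rw [List.cons_append, runs, ih h₁.of_cons hdesc']
      exact if_pos hac

theorem numRuns_eq_two_iff {w : List ℕ} :
    numRuns w = 2 ↔ ∃ l₁ l₂ : List ℕ, w = l₁ ++ l₂ ∧ l₁.Pairwise (· ≤ ·) ∧
      l₂.Pairwise (· ≤ ·) ∧ l₂ ≠ [] ∧ ∃ x ∈ l₁, ∃ y ∈ l₂, y < x := by
  constructor
  · intro h
    obtain ⟨l₁, l₂, hr⟩ := List.length_eq_two.1 h
    have hdesc := isChain_runs w
    rw [hr, List.isChain_pair] at hdesc
    refine ⟨l₁, l₂, ?_, pairwise_of_mem_runs (hr ▸ List.mem_cons_self),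
      pairwise_of_mem_runs (hr ▸ List.mem_pair.2 (Or.inr rfl)),
      ne_nil_of_mem_runs (hr ▸ List.mem_pair.2 (Or.inr rfl)), hdesc⟩
    simpa [hr] using (flatten_runs w).symm
  · rintro ⟨l₁, l₂, rfl, h₁, h₂, hne, hdesc⟩
    rw [numRuns, runs_append_of_exists_lt h₁ h₂ hne hdesc]
    rfl

theorem exists_runs_cons_eq (a : ℕ) (l : List ℕ) :
    ∃ t rs, runs (a :: l) = (a :: t) :: rs := by
  rw [runs]
  split
  · exact ⟨[], [], rfl⟩
  · exact ⟨[], _, rfl⟩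
  · split_ifs
    exacts [⟨_, _, rfl⟩, ⟨[], _, rfl⟩]

theorem runs_cons_cons_of_le {a b : ℕ} (l : List ℕ) (hab : a ≤ b) :
    ∃ t rs, runs (b :: l) = (b :: t) :: rs ∧ runs (a :: b :: l) = (a :: b :: t) :: rs := by
  obtain ⟨t, rs, hr⟩ := exists_runs_cons_eq b l
  refine ⟨t, rs, hr, ?_⟩
  rw [runs, hr]
  exact if_pos hab

theorem numRuns_cons_cons_of_le {a b : ℕ} (l : List ℕ) (hab : a ≤ b) :
    numRuns (a :: b :: l) = numRuns (b :: l) := by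
  obtain ⟨t, rs, hr, hr'⟩ := runs_cons_cons_of_le l hab
  rw [numRuns, numRuns, hr, hr']
  rfl

theorem headD_le_of_mem {s : List ℕ} (hs : s.Pairwise (· ≤ ·)) {x : ℕ} (hx : x ∈ s) (d : ℕ) :
    s.headD d ≤ x := by
  rcases s with - | ⟨b, t⟩
  · simp at hx
  · rcases List.mem_cons.1 hx with rfl | hx
    · exact le_rfl
    · exact List.rel_of_pairwise_cons hs hx

theorem IsFlattened.le_of_mem {a : ℕ} {l : List ℕ} (h : IsFlattened (a :: l)) {x : ℕ}
    (hx : x ∈ a :: l) : a ≤ x := by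
  obtain ⟨t, rs, hr⟩ := exists_runs_cons_eq a l
  have hheads : ∀ s ∈ runs (a :: l), a ≤ s.headD 0 := by
    have := List.isChain_iff_pairwise.1 h
    rw [hr, List.map_cons, List.headD_cons, List.pairwise_cons] at this
    rw [hr]
    rintro s (_ | ⟨_, hs⟩)
    · exact le_rfl
    · exact this.1 _ (List.mem_map_of_mem hs)
  rw [← flatten_runs (a :: l), List.mem_flatten] at hx
  obtain ⟨s, hs, hxs⟩ := hx
  exact (hheads s hs).trans (headD_le_of_mem (pairwise_of_mem_runs hs) hxs 0)

theorem ne_nil_of_numRuns_eq_two {w : List ℕ} (h : numRuns w = 2) : w ≠ [] := by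
  rintro rfl
  exact absurd h (by decide)

theorem isFlattened_cons_of_numRuns_eq_two {a : ℕ} {l : List ℕ} (ha : ∀ x ∈ l, a ≤ x)
    (hl : numRuns l = 2) : IsFlattened (a :: l) := by
  obtain ⟨b, l, rfl⟩ := List.exists_cons_of_ne_nil (ne_nil_of_numRuns_eq_two hl)
  obtain ⟨t, rs, hr, hr'⟩ := runs_cons_cons_of_le l (ha b List.mem_cons_self)
  obtain ⟨s, rfl⟩ : ∃ s, rs = [s] := by
    rw [numRuns, hr, List.length_cons] at hl
    exact List.length_eq_one_iff.1 (by omega)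
  have hs : s ∈ runs (b :: l) := hr ▸ List.mem_pair.2 (Or.inr rfl)
  obtain ⟨c, u, rfl⟩ := List.exists_cons_of_ne_nil (ne_nil_of_mem_runs hs)
  have hc : c ∈ b :: l := by
    rw [← flatten_runs (b :: l)]
    exact List.mem_flatten.2 ⟨_, hs, List.mem_cons_self⟩
  unfold IsFlattened
  rw [hr']
  exact List.isChain_pair.2 (ha c hc)

theorem flatInsK_one_two (n : ℕ) :
    flatInsK {1} n 2 = List.cons 1 '' {σ | σ.Perm (List.range' 1 n) ∧ numRuns σ = 2} := by
  ext w
  constructor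
  · rintro ⟨⟨hw, -⟩, hflat, hruns⟩
    have hmem : ∀ x, x ∈ w ↔ x ∈ List.range' 1 n ∨ x = 1 := fun x => by
      rw [← Multiset.mem_coe, hw]
      simp
    have hpos : ∀ x ∈ w, 1 ≤ x := fun x hx => by
      rcases (hmem x).1 hx with hx | rfl
      exacts [(List.mem_range'_1.1 hx).1, le_rfl]
    obtain ⟨a, σ, rfl⟩ := List.exists_cons_of_ne_nil (List.ne_nil_of_mem ((hmem 1).2 (Or.inr rfl)))
    obtain rfl : a = 1 :=
      le_antisymm (hflat.le_of_mem ((hmem 1).2 (Or.inr rfl))) (hpos a List.mem_cons_self)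
    refine ⟨σ, ⟨?_, ?_⟩, rfl⟩
    · rw [← Multiset.coe_eq_coe, ← Multiset.cons_inj_right 1, Multiset.cons_coe, hw, add_comm,
        Multiset.singleton_add]
    · obtain ⟨b, l, rfl⟩ : ∃ b l, σ = b :: l :=
        List.exists_cons_of_ne_nil (by rintro rfl; exact absurd hruns (by decide))
      rwa [← numRuns_cons_cons_of_le l (hpos b (List.mem_cons_of_mem _ List.mem_cons_self))]
  · rintro ⟨σ, ⟨hσ, hruns⟩, rfl⟩
    have hpos : ∀ x ∈ σ, 1 ≤ x := fun x hx => (List.mem_range'_1.1 (hσ.subset hx)).1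
    refine ⟨⟨?_, σ, hσ, List.sublist_cons_self _ _⟩, isFlattened_cons_of_numRuns_eq_two hpos hruns, ?_⟩
    · rw [← Multiset.cons_coe, add_comm, Multiset.singleton_add, Multiset.coe_eq_coe.2 hσ]
    · obtain ⟨b, l, rfl⟩ := List.exists_cons_of_ne_nil (ne_nil_of_numRuns_eq_two hruns)
      rwa [numRuns_cons_cons_of_le l (hpos b List.mem_cons_self)]

/-- The condition for `A.sort ++ (s \ A).sort` to have a descent, i.e. exactly two runs. -/
def IsDescentSplit (s A : Finset ℕ) : Prop := ∃ a ∈ A, ∃ b ∈ s \ A, b < a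

instance (s : Finset ℕ) : DecidablePred (IsDescentSplit s) := fun A =>
  inferInstanceAs (Decidable (∃ a ∈ A, ∃ b ∈ s \ A, b < a))

theorem runs_sort_append_sort {A B : Finset ℕ} (h : ∃ a ∈ A, ∃ b ∈ B, b < a) :
    runs (A.sort ++ B.sort) = [A.sort, B.sort] := by
  obtain ⟨a, ha, b, hb, hba⟩ := h
  exact runs_append_of_exists_lt (A.pairwise_sort _) (B.pairwise_sort _)
    (List.ne_nil_of_mem ((Finset.mem_sort _).2 hb))
    ⟨a, (Finset.mem_sort _).2 ha, b, (Finset.mem_sort _).2 hb, hba⟩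

theorem injOn_sort_append_sort (s : Finset ℕ) :
    Set.InjOn (fun A : Finset ℕ => A.sort ++ (s \ A).sort) {A | IsDescentSplit s A} := by
  intro A hA A' hA' h
  have hruns := congrArg runs h
  simp only [runs_sort_append_sort hA, runs_sort_append_sort hA', List.cons.injEq] at hruns
  simpa using congrArg List.toFinset hruns.1

theorem perm_numRuns_two_eq_image {l : List ℕ} (hl : l.Nodup) :
    {σ | σ.Perm l ∧ numRuns σ = 2} = (fun A : Finset ℕ => A.sort ++ (l.toFinset \ A).sort) ''
      {A | A ⊆ l.toFinset ∧ IsDescentSplit l.toFinset A} := by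
  ext σ
  constructor
  · rintro ⟨hσ, hruns⟩
    obtain ⟨l₁, l₂, rfl, h₁, h₂, -, x, hx, y, hy, hyx⟩ := numRuns_eq_two_iff.1 hruns
    obtain ⟨hnd₁, hnd₂, hdisj⟩ := List.nodup_append.1 (hσ.nodup_iff.2 hl)
    have hsdiff : l.toFinset \ l₁.toFinset = l₂.toFinset := by
      ext z
      simp only [Finset.mem_sdiff, List.mem_toFinset, ← hσ.mem_iff, List.mem_append]
      exact ⟨fun ⟨h, h'⟩ => h.resolve_left h', fun h => ⟨Or.inr h, fun h' => hdisj z h' z h rfl⟩⟩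
    refine ⟨l₁.toFinset, ⟨fun z hz => ?_, x, List.mem_toFinset.2 hx, y, ?_, hyx⟩, ?_⟩
    · simpa [← hσ.mem_iff] using Or.inl (List.mem_toFinset.1 hz)
    · simpa [hsdiff] using hy
    · simp only [hsdiff, (List.toFinset_sort _ hnd₁).2 h₁, (List.toFinset_sort _ hnd₂).2 h₂]
  · rintro ⟨A, ⟨hA, a, ha, b, hb, hba⟩, rfl⟩
    refine ⟨List.perm_of_nodup_nodup_toFinset_eq ?_ hl ?_, ?_⟩
    · refine List.nodup_append.2 ⟨A.sort_nodup _, Finset.sort_nodup _ _, ?_⟩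
      intro x hx y hy hxy
      exact (Finset.mem_sdiff.1 ((Finset.mem_sort _).1 hy)).2 (hxy ▸ (Finset.mem_sort _).1 hx)
    · rw [List.toFinset_append, Finset.sort_toFinset, Finset.sort_toFinset,
        Finset.union_sdiff_of_subset hA]
    · rw [numRuns, runs_sort_append_sort ⟨a, ha, b, hb, hba⟩]
      rfl

theorem not_isDescentSplit_Icc_iff {n : ℕ} {A : Finset ℕ} (hA : A ⊆ Finset.Icc 1 n) :
    ¬IsDescentSplit (Finset.Icc 1 n) A ↔ ∃ k ≤ n, A = Finset.Icc 1 k := by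
  constructor
  · intro h
    simp only [IsDescentSplit, not_exists, not_and, not_lt] at h
    refine ⟨A.sup id, Finset.sup_le fun a ha => (Finset.mem_Icc.1 (hA ha)).2, ?_⟩
    ext x
    refine ⟨fun hx => Finset.mem_Icc.2 ⟨(Finset.mem_Icc.1 (hA hx)).1, Finset.le_sup (f := id) hx⟩,
      fun hx => ?_⟩
    obtain ⟨hx1, hxk⟩ := Finset.mem_Icc.1 hx
    obtain ⟨a, ha, hak⟩ := Finset.exists_mem_eq_sup A
      (Finset.nonempty_iff_ne_empty.2 (by rintro rfl; simp at hxk; omega)) id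
    have hxa : x ≤ a := by simpa [hak] using hxk
    by_contra hxA
    have hax := h a ha x (Finset.mem_sdiff.2
      ⟨Finset.mem_Icc.2 ⟨hx1, hxa.trans (Finset.mem_Icc.1 (hA ha)).2⟩, hxA⟩)
    exact hxA (le_antisymm hxa hax ▸ ha)
  · rintro ⟨k, hk, rfl⟩ ⟨a, ha, b, hb, hba⟩
    simp only [Finset.mem_sdiff, Finset.mem_Icc] at ha hb
    omega

theorem card_filter_isDescentSplit_Icc (n : ℕ) :
    ((Finset.Icc 1 n).powerset.filter (IsDescentSplit (Finset.Icc 1 n))).card =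
      2 ^ n - (n + 1) := by
  have hbad : ((Finset.Icc 1 n).powerset.filter fun A => ¬IsDescentSplit (Finset.Icc 1 n) A) =
      (Finset.range (n + 1)).image (Finset.Icc 1) := by
    ext A
    simp only [Finset.mem_filter, Finset.mem_powerset, Finset.mem_image, Finset.mem_range]
    constructor
    · rintro ⟨hA, h⟩
      obtain ⟨k, hk, rfl⟩ := (not_isDescentSplit_Icc_iff hA).1 h
      exact ⟨k, by omega, rfl⟩
    · rintro ⟨k, hk, rfl⟩
      have hsub : Finset.Icc 1 k ⊆ Finset.Icc 1 n := Finset.Icc_subset_Icc_right (by omega)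
      exact ⟨hsub, (not_isDescentSplit_Icc_iff hsub).2 ⟨k, by omega, rfl⟩⟩
  have hcard_bad : ((Finset.range (n + 1)).image (Finset.Icc 1)).card = n + 1 := by
    rw [Finset.card_image_of_injective _ fun k k' h => by simpa using congrArg Finset.card h,
      Finset.card_range]
  have htotal := Finset.card_filter_add_card_filter_not (s := (Finset.Icc 1 n).powerset)
    (p := IsDescentSplit (Finset.Icc 1 n))
  rw [hbad, hcard_bad, Finset.card_powerset, Nat.card_Icc, Nat.add_sub_cancel] at htotal
  omega

theorem ncard_perm_range'_numRuns_two (n : ℕ) :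
    {σ | σ.Perm (List.range' 1 n) ∧ numRuns σ = 2}.ncard = 2 ^ n - n - 1 := by
  have hsubsets : {A | A ⊆ Finset.Icc 1 n ∧ IsDescentSplit (Finset.Icc 1 n) A} =
      ↑((Finset.Icc 1 n).powerset.filter (IsDescentSplit (Finset.Icc 1 n))) := by
    ext A
    simp
  rw [perm_numRuns_two_eq_image List.nodup_range', List.toFinset_range'_1_1,
    ((injOn_sort_append_sort _).mono fun A hA => hA.2).ncard_image, hsubsets,
    Set.ncard_coe_finset, card_filter_isDescentSplit_Icc, Nat.sub_sub]

end FlatPF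

open FlatPF in
theorem stmt15_general (n : ℕ) :
    fS {1} n 2 = 2 ^ n - n - 1 ∧
    fS {1} n 2 = {σ : List ℕ | σ.Perm (List.range' 1 n) ∧ numRuns σ = 2}.ncard := by
  have h : fS {1} n 2 = {σ : List ℕ | σ.Perm (List.range' 1 n) ∧ numRuns σ = 2}.ncard := by
    rw [fS, flatInsK_one_two, Set.ncard_image_of_injective _ List.cons_injective]
  exact ⟨h.trans (ncard_perm_range'_numRuns_two n), h⟩

open FlatPF in
/-- For `n ≥ 2`, the number of flattened `{1}`-insertion parking functions of order
`n` with exactly two runs is the Eulerian number `A(n,1) = 2^n - n - 1`, the number of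
permutations of `[n]` with exactly one descent (equivalently, two runs). -/
theorem stmt15 (n : ℕ) (hn : 2 ≤ n) :
    fS {1} n 2 = 2 ^ n - n - 1 ∧
    fS {1} n 2 = {σ : List ℕ | σ.Perm (List.range' 1 n) ∧ numRuns σ = 2}.ncard :=
  stmt15_general n
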